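/- Let d ≥ 1, let F : ℝ^d → ℝ be L-Lipschitz continuous for some L > 0, and let h > 0. Define the smoothed function F_h(x) := (1/vol(B^d)) ∫_{B^d} F(x + h u) du, where B^d is the closed unit ball in ℝ^d. Then F_h is differentiable at every point of ℝ^d (even when F itself is not differentiable). -/

import Mathlib

open MeasureTheory Metric

/-- The `i`-th column of the matrix `G`, i.e. `G eᵢ`, viewed as a vector of `ℝ^d`. -/
noncomputable def gcol {d : ℕ} (G : Matrix (Fin d) (Fin d) ℝ) (i : Fin d) :
    EuclideanSpace ℝ (Fin d) := WithLp.toLp 2 (fun j => G j i)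

/-- The structured forward finite-difference gradient surrogate
`g_{(G,h)}(v) := (d/ℓ) · Σ_{i=1}^{ℓ} ((F(v + h·G eᵢ) − F(v))/h) · G eᵢ`. -/
noncomputable def fdSurrogate {d : ℕ} (F : EuclideanSpace ℝ (Fin d) → ℝ) (h : ℝ)
    (G : Matrix (Fin d) (Fin d) ℝ) (ℓ : ℕ) (v : EuclideanSpace ℝ (Fin d)) :
    EuclideanSpace ℝ (Fin d) :=
  ((d : ℝ) / (ℓ : ℝ)) •
    ∑ i ∈ Finset.univ.filter (fun i : Fin d => (i : ℕ) < ℓ),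
      ((F (v + h • gcol G i) - F v) / h) • gcol G i

/-- The ball-smoothing `F_h(x) := (1/vol(B^d)) ∫_{B^d} F(x + h u) du`. -/
noncomputable def ballSmooth {d : ℕ} (F : EuclideanSpace ℝ (Fin d) → ℝ) (h : ℝ)
    (x : EuclideanSpace ℝ (Fin d)) : ℝ :=
  (volume (closedBall (0 : EuclideanSpace ℝ (Fin d)) 1)).toReal⁻¹ *
    ∫ u in closedBall (0 : EuclideanSpace ℝ (Fin d)) 1, F (x + h • u)

/-!
Translation by `x` and scaling by `h ≠ 0` preserve Lebesgue null sets, so by Rademacher's theorem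
the integrand `x ↦ F (x + h u)` is differentiable at `x` for almost every `u`. It is moreover
`L`-Lipschitz in `x` uniformly in `u`, so differentiation under the integral sign applies with the
constant dominating function `L` on the compact ball.
-/

section
variable {E V : Type*} [NormedAddCommGroup E] [NormedSpace ℝ E] [FiniteDimensional ℝ E]
    [MeasurableSpace E] [BorelSpace E] (μ : Measure E) [μ.IsAddHaarMeasure]
    [NormedAddCommGroup V] [NormedSpace ℝ V] [FiniteDimensional ℝ V]
    {C : NNReal} {f : E → V}

theorem LipschitzWith.ae_differentiableAt_add_smul (hf : LipschitzWith C f) (x : E) {h : ℝ}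
    (hh : h ≠ 0) : ∀ᵐ u ∂μ, DifferentiableAt ℝ f (x + h • u) :=
  ((measurePreserving_add_left μ x).quasiMeasurePreserving.comp
    (Measure.quasiMeasurePreserving_smul μ hh)).ae hf.ae_differentiableAt

theorem LipschitzWith.hasFDerivAt_setIntegral_add_smul (hf : LipschitzWith C f) {s : Set E}
    (hs : IsCompact s) (x : E) {h : ℝ} (hh : h ≠ 0) :
    HasFDerivAt (fun y ↦ ∫ u in s, f (y + h • u) ∂μ)
      (∫ u in s, fderiv ℝ f (x + h • u) ∂μ) x := by
  have hcont (y : E) : Continuous fun u ↦ f (y + h • u) := hf.continuous.comp (by fun_prop)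
  refine (hasFDerivAt_integral_of_dominated_loc_of_lip (bound := fun _ ↦ (C : ℝ))
    Filter.univ_mem (.of_forall fun y ↦ (hcont y).aestronglyMeasurable)
    ((hcont x).continuousOn.integrableOn_compact hs)
    ((measurable_fderiv ℝ f).comp (by fun_prop)).aestronglyMeasurable
    (.of_forall fun u ↦ ?_) (integrableOn_const hs.measure_lt_top.ne)
    ((ae_restrict_of_ae (hf.ae_differentiableAt_add_smul μ x hh)).mono fun u hu ↦ ?_)).2
  · simpa [Function.comp_def] using hf.comp (IsometryEquiv.addRight (h • u)).isometry.lipschitz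
  · exact (hasFDerivAt_comp_add_right (h • u)).2 hu.hasFDerivAt

end

theorem ballSmooth_differentiable_general {d : ℕ}
    (F : EuclideanSpace ℝ (Fin d) → ℝ) (L : ℝ)
    (hlip : ∀ x y : EuclideanSpace ℝ (Fin d), |F x - F y| ≤ L * ‖x - y‖)
    (h : ℝ) (hh : 0 < h) :
    ∀ x : EuclideanSpace ℝ (Fin d), DifferentiableAt ℝ (ballSmooth F h) x := by
  intro x
  have hF : LipschitzWith (Real.toNNReal L) F :=
    .of_dist_le' fun x y ↦ by simpa only [dist_eq_norm, Real.norm_eq_abs] using hlip x y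
  exact ((hF.hasFDerivAt_setIntegral_add_smul volume (isCompact_closedBall 0 1) x
    hh.ne').differentiableAt).const_mul _

/-- the ball-smoothing `F_h` of an `L`-Lipschitz function `F` is
differentiable at every point of `ℝ^d`. -/
theorem ballSmooth_differentiable {d : ℕ} (hd : 1 ≤ d)
    (F : EuclideanSpace ℝ (Fin d) → ℝ) (L : ℝ) (hL : 0 < L)
    (hlip : ∀ x y : EuclideanSpace ℝ (Fin d), |F x - F y| ≤ L * ‖x - y‖)
    (h : ℝ) (hh : 0 < h) :
    ∀ x : EuclideanSpace ℝ (Fin d), DifferentiableAt ℝ (ballSmooth F h) x :=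
  ballSmooth_differentiable_general F L hlip h hh
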